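/- Let (V, ω) be a symplectic vector space over ℝ with V ≠ 0, let (𝔥, ∘, ⟨·,·⟩) be a special symplectic subalgebra of sp(V, ω), and let 𝔤 := sl(2,ℝ) ⊕ 𝔥 ⊕ (ℝ² ⊗ V) be the Lie algebra with bracket determined by: the commutator bracket on sl(2,ℝ) and on 𝔥; [A, h] = 0 for A ∈ sl(2,ℝ), h ∈ 𝔥; [A, e⊗x] = (Ae)⊗x; [h, e⊗x] = e⊗(hx); and [e⊗x, f⊗y] = ω(x,y)·S(e,f) + a(e,f)·(x∘y), where a is a fixed nonzero alternating bilinear form on ℝ² and S(e,f)(g) := a(e,g)f + a(f,g)e. Fix a basis e₊, e₋ of ℝ² with a(e₊,e₋) = 1, let c > 0, and let ρ₀ ∈ 𝔥 be such that ρ₀∘ρ₀ = −c²·id_V as an endomorphism of V (i.e. ρ₀² = −c² id_V) and ω(ρ₀x, x) > 0 for all 0 ≠ x ∈ V. Set a₀ := (c/2)(S(e₊,e₊) + S(e₋,e₋)) + ρ₀ ∈ 𝔤. Then the centralizer z(a₀) := {x ∈ 𝔤 : [x, a₀] = 0} equals the internal direct sum ℝ·a₀ ⊕ 𝔨 ⊕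 {c·(e₊⊗x) − e₋⊗(ρ₀x) : x ∈ V}, where 𝔨 := {h ∈ 𝔥 : [h, ρ₀] = 0}. -/

import Mathlib

open scoped TensorProduct

attribute [local instance 100] LieRing.ofAssociativeRing

/-- `S(e,f) : g ↦ a(e,g)f + a(f,g)e`, an endomorphism of `ℝ²`. -/
noncomputable def Sfun (a : LinearMap.BilinForm ℝ (Fin 2 → ℝ)) (e f : Fin 2 → ℝ) :
    Module.End ℝ (Fin 2 → ℝ) :=
  (a e).smulRight f + (a f).smulRight e

/-- `sl(2,ℝ)`, the trace-free endomorphisms of `ℝ²`. -/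
noncomputable def sl2R : Submodule ℝ (Module.End ℝ (Fin 2 → ℝ)) :=
  LinearMap.ker (LinearMap.trace ℝ (Fin 2 → ℝ))

/-- The underlying vector space `sl(2,ℝ) ⊕ 𝔥 ⊕ (ℝ² ⊗ V)` of the Lie algebra `𝔤`. -/
abbrev gType (V : Type) [AddCommGroup V] [Module ℝ V]
    (𝔥 : LieSubalgebra ℝ (Module.End ℝ V)) : Type :=
  ↥sl2R × ↥𝔥 × ((Fin 2 → ℝ) ⊗[ℝ] V)

set_option maxHeartbeats 2000000 in
/-- In the Lie algebra `𝔤 = sl(2,ℝ) ⊕ 𝔥 ⊕ (ℝ² ⊗ V)` associated to a special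
symplectic subalgebra, let `a₀ = (c/2)(S(e₊,e₊) + S(e₋,e₋)) + ρ₀` with `c > 0`,
`ρ₀² = −c²·id_V` and `ω(ρ₀x, x) > 0` for `x ≠ 0`.  Then the centralizer of `a₀` is the
internal direct sum `ℝ·a₀ ⊕ 𝔨 ⊕ {c(e₊⊗x) − e₋⊗(ρ₀x) : x ∈ V}`, where
`𝔨 = {h ∈ 𝔥 : [h, ρ₀] = 0}`. -/
theorem special_symplectic_centralizer
    (V : Type) [AddCommGroup V] [Module ℝ V] [FiniteDimensional ℝ V]
    (hV_ne : ∃ v : V, v ≠ 0)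
    (ω : LinearMap.BilinForm ℝ V)
    (hω_alt : LinearMap.IsAlt ω) (hω_nd : LinearMap.BilinForm.Nondegenerate ω)
    (𝔥 : LieSubalgebra ℝ (Module.End ℝ V))
    (h_sp : ∀ h ∈ 𝔥, ∀ x y : V, ω (h x) y + ω x (h y) = 0)
    (circ : V →ₗ[ℝ] V →ₗ[ℝ] ↥𝔥)
    (h_circ_symm : ∀ x y : V, circ x y = circ y x)
    (B : LinearMap.BilinForm ℝ ↥𝔥)
    (hB_symm : ∀ u v : ↥𝔥, B u v = B v u)
    (hB_nd : LinearMap.BilinForm.Nondegenerate B)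
    (hE : ∀ (h : ↥𝔥) (x y : V),
      ⁅(h : Module.End ℝ V), (circ x y : Module.End ℝ V)⁆
        = (circ ((h : Module.End ℝ V) x) y : Module.End ℝ V)
          + (circ x ((h : Module.End ℝ V) y) : Module.End ℝ V))
    (hI : ∀ u h v : ↥𝔥, B ⁅u, h⁆ v + B h ⁅u, v⁆ = 0)
    (hA1 : ∀ (h : ↥𝔥) (x y : V),
      B h (circ x y) = ω ((h : Module.End ℝ V) x) y
        ∧ ω ((h : Module.End ℝ V) x) y = ω ((h : Module.End ℝ V) y) x)
    (hA2 : ∀ x y z : V,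
      (circ x y : Module.End ℝ V) z - (circ x z : Module.End ℝ V) y
        = (2 * ω y z) • x - ω x y • z + ω x z • y)
    -- a fixed nonzero alternating bilinear form on ℝ²
    (a : LinearMap.BilinForm ℝ (Fin 2 → ℝ))
    (ha_alt : LinearMap.IsAlt a) (ha_ne : a ≠ 0)
    -- the bilinear alternating bracket on 𝔤, determined by the prescribed values
    (br : gType V 𝔥 →ₗ[ℝ] gType V 𝔥 →ₗ[ℝ] gType V 𝔥)
    (hbr_alt : ∀ u : gType V 𝔥, br u u = 0)
    (hbr_ss : ∀ A A' : ↥sl2R,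
      (((br (A, 0, 0) (A', 0, 0)).1 : Module.End ℝ (Fin 2 → ℝ))
          = ⁅(A : Module.End ℝ (Fin 2 → ℝ)), (A' : Module.End ℝ (Fin 2 → ℝ))⁆)
        ∧ (br (A, 0, 0) (A', 0, 0)).2.1 = 0 ∧ (br (A, 0, 0) (A', 0, 0)).2.2 = 0)
    (hbr_sh : ∀ (A : ↥sl2R) (h : ↥𝔥), br (A, 0, 0) (0, h, 0) = 0)
    (hbr_st : ∀ (A : ↥sl2R) (e : Fin 2 → ℝ) (x : V),
      br (A, 0, 0) (0, 0, e ⊗ₜ[ℝ] x)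
        = (0, 0, ((A : Module.End ℝ (Fin 2 → ℝ)) e) ⊗ₜ[ℝ] x))
    (hbr_hh : ∀ h k : ↥𝔥, br (0, h, 0) (0, k, 0) = (0, ⁅h, k⁆, 0))
    (hbr_ht : ∀ (h : ↥𝔥) (e : Fin 2 → ℝ) (x : V),
      br (0, h, 0) (0, 0, e ⊗ₜ[ℝ] x) = (0, 0, e ⊗ₜ[ℝ] ((h : Module.End ℝ V) x)))
    (hbr_tt : ∀ (e f : Fin 2 → ℝ) (x y : V),
      (((br (0, 0, e ⊗ₜ[ℝ] x) (0, 0, f ⊗ₜ[ℝ] y)).1 : Module.End ℝ (Fin 2 → ℝ))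
          = ω x y • Sfun a e f)
        ∧ (br (0, 0, e ⊗ₜ[ℝ] x) (0, 0, f ⊗ₜ[ℝ] y)).2.1 = a e f • circ x y
        ∧ (br (0, 0, e ⊗ₜ[ℝ] x) (0, 0, f ⊗ₜ[ℝ] y)).2.2 = 0)
    -- a basis e₊, e₋ of ℝ² with a(e₊, e₋) = 1
    (ep em : Fin 2 → ℝ)
    (h_basis : ∀ g : Fin 2 → ℝ, ∃ s t : ℝ, g = s • ep + t • em)
    (ha1 : a ep em = 1)
    -- the data c, ρ₀ and the element a₀ = (c/2)(S(e₊,e₊) + S(e₋,e₋)) + ρ₀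
    (c : ℝ) (hc : 0 < c)
    (ρ₀ : ↥𝔥)
    (hρ_sq : (ρ₀ : Module.End ℝ V) ∘ₗ (ρ₀ : Module.End ℝ V) = (-(c^2)) • LinearMap.id)
    (hρ_pos : ∀ x : V, x ≠ 0 → 0 < ω ((ρ₀ : Module.End ℝ V) x) x)
    (A₀ : ↥sl2R)
    (hA₀ : (A₀ : Module.End ℝ (Fin 2 → ℝ)) = (c/2) • (Sfun a ep ep + Sfun a em em)) :
    -- the centralizer of a₀ is ℝ·a₀ ⊕ 𝔨 ⊕ {c(e₊⊗x) − e₋⊗(ρ₀x)}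
    (∀ g : gType V 𝔥,
      br g (A₀, ρ₀, 0) = 0 ↔
        ∃ (t : ℝ) (k : ↥𝔥) (x : V), ⁅k, ρ₀⁆ = 0 ∧
          g = t • ((A₀, ρ₀, 0) : gType V 𝔥) + ((0 : ↥sl2R), k, (0 : (Fin 2 → ℝ) ⊗[ℝ] V))
            + (0, 0, c • (ep ⊗ₜ[ℝ] x) - em ⊗ₜ[ℝ] ((ρ₀ : Module.End ℝ V) x))) ∧
    -- and the sum is direct
    (∀ (t t' : ℝ) (k k' : ↥𝔥) (x x' : V), ⁅k, ρ₀⁆ = 0 → ⁅k', ρ₀⁆ = 0 →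
      t • ((A₀, ρ₀, 0) : gType V 𝔥) + ((0 : ↥sl2R), k, (0 : (Fin 2 → ℝ) ⊗[ℝ] V))
          + (0, 0, c • (ep ⊗ₜ[ℝ] x) - em ⊗ₜ[ℝ] ((ρ₀ : Module.End ℝ V) x))
        = t' • ((A₀, ρ₀, 0) : gType V 𝔥) + ((0 : ↥sl2R), k', (0 : (Fin 2 → ℝ) ⊗[ℝ] V))
          + (0, 0, c • (ep ⊗ₜ[ℝ] x') - em ⊗ₜ[ℝ] ((ρ₀ : Module.End ℝ V) x')) →
      t = t' ∧ k = k' ∧ x = x') := by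
  classical
  have ha_ep : a ep ep = 0 := ha_alt ep
  have ha_em : a em em = 0 := ha_alt em
  have ha_me : a em ep = -1 := by
    have h := ha_alt.neg ep em
    rw [ha1] at h; linarith
  have hexp : ∀ v : Fin 2 → ℝ, v = (a v em) • ep + (a ep v) • em := by
    intro v
    obtain ⟨s, t, rfl⟩ := h_basis v
    simp only [map_add, map_smul, LinearMap.add_apply, LinearMap.smul_apply, ha_ep, ha_em,
      ha1, smul_eq_mul]
    module
  have hA₀ep : (A₀ : Module.End ℝ (Fin 2 → ℝ)) ep = (-c) • em := by
    rw [hA₀]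
    simp only [Sfun, LinearMap.smul_apply, LinearMap.add_apply, LinearMap.smulRight_apply,
      ha_ep, ha_me, smul_eq_mul]
    module
  have hA₀em : (A₀ : Module.End ℝ (Fin 2 → ℝ)) em = c • ep := by
    rw [hA₀]
    simp only [Sfun, LinearMap.smul_apply, LinearMap.add_apply, LinearMap.smulRight_apply,
      ha_em, ha1, smul_eq_mul]
    module
  have hρ2 : ∀ x : V, (ρ₀ : Module.End ℝ V) ((ρ₀ : Module.End ℝ V) x) = (-(c^2)) • x := by
    intro x
    have h := LinearMap.ext_iff.mp hρ_sq x
    simpa using h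
  set φ : (Fin 2 → ℝ) ⊗[ℝ] V →ₗ[ℝ] V :=
    TensorProduct.lift ((LinearMap.lsmul ℝ V).comp (a.flip em)) with hφdef
  set ψ : (Fin 2 → ℝ) ⊗[ℝ] V →ₗ[ℝ] V :=
    TensorProduct.lift ((LinearMap.lsmul ℝ V).comp (a ep)) with hψdef
  have hφ : ∀ (e : Fin 2 → ℝ) (x : V), φ (e ⊗ₜ[ℝ] x) = a e em • x := by
    intro e x
    simp [hφdef, TensorProduct.lift.tmul, LinearMap.lsmul_apply, LinearMap.flip_apply]
  have hψ : ∀ (e : Fin 2 → ℝ) (x : V), ψ (e ⊗ₜ[ℝ] x) = a ep e • x := by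
    intro e x
    simp [hψdef, TensorProduct.lift.tmul, LinearMap.lsmul_apply]
  have htau : ∀ τ : (Fin 2 → ℝ) ⊗[ℝ] V, ep ⊗ₜ[ℝ] (φ τ) + em ⊗ₜ[ℝ] (ψ τ) = τ := by
    intro τ
    induction τ using TensorProduct.induction_on with
    | zero => simp
    | tmul e x =>
      obtain ⟨s, t, rfl⟩ := h_basis e
      rw [hφ, hψ]
      simp only [map_add, map_smul, LinearMap.add_apply, LinearMap.smul_apply, ha_ep, ha_em,
        ha1, smul_eq_mul, TensorProduct.add_tmul, TensorProduct.smul_tmul, TensorProduct.tmul_smul]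
      module
    | add τ₁ τ₂ h₁ h₂ =>
      rw [map_add, map_add, TensorProduct.tmul_add, TensorProduct.tmul_add]
      conv_rhs => rw [← h₁, ← h₂]
      abel
  set L : (Fin 2 → ℝ) ⊗[ℝ] V →ₗ[ℝ] (Fin 2 → ℝ) ⊗[ℝ] V :=
    TensorProduct.map (A₀ : Module.End ℝ (Fin 2 → ℝ)) LinearMap.id
      + TensorProduct.map LinearMap.id (ρ₀ : Module.End ℝ V) with hLdef
  have hL : ∀ (e : Fin 2 → ℝ) (x : V),
      L (e ⊗ₜ[ℝ] x) = ((A₀ : Module.End ℝ (Fin 2 → ℝ)) e) ⊗ₜ[ℝ] x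
        + e ⊗ₜ[ℝ] ((ρ₀ : Module.End ℝ V) x) := by
    intro e x
    simp [hLdef, TensorProduct.map_tmul]
  have hker : ∀ x : V, L (c • (ep ⊗ₜ[ℝ] x) - em ⊗ₜ[ℝ] ((ρ₀ : Module.End ℝ V) x)) = 0 := by
    intro x
    rw [map_sub, map_smul, hL, hL, hA₀ep, hA₀em, hρ2]
    rw [TensorProduct.smul_tmul, TensorProduct.smul_tmul, TensorProduct.tmul_smul,
      TensorProduct.tmul_smul, TensorProduct.tmul_smul]
    module
  have hskew : ∀ u v : gType V 𝔥, br u v = - br v u := by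
    intro u v
    have h := hbr_alt (u + v)
    have h2 : br u u + br v u + (br u v + br v v) = 0 := by
      simpa [map_add, LinearMap.add_apply] using h
    rw [hbr_alt u, hbr_alt v, zero_add, add_zero] at h2
    exact eq_neg_of_add_eq_zero_right (a := br v u) (b := br u v) h2
  have hsplit : ∀ (A : ↥sl2R) (h : ↥𝔥) (τ : (Fin 2 → ℝ) ⊗[ℝ] V),
      ((A, h, τ) : gType V 𝔥) = ((A, 0, 0) : gType V 𝔥) + (0, h, 0) + (0, 0, τ) := by
    intro A h τ
    simp [Prod.ext_iff]
  have ha0split : ((A₀, ρ₀, (0 : (Fin 2 → ℝ) ⊗[ℝ] V)) : gType V 𝔥)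
      = ((A₀, 0, 0) : gType V 𝔥) + (0, ρ₀, 0) := by
    simp [Prod.ext_iff]
  have hzero3 : ∀ τ : (Fin 2 → ℝ) ⊗[ℝ] V,
      (((0 : ↥sl2R), (0 : ↥𝔥), τ) : gType V 𝔥) = (0, 0, τ) := fun τ => rfl
  have hLa : ∀ τ : (Fin 2 → ℝ) ⊗[ℝ] V,
      br ((A₀, ρ₀, 0) : gType V 𝔥) ((0, 0, τ) : gType V 𝔥) = (0, 0, L τ) := by
    intro τ
    induction τ using TensorProduct.induction_on with
    | zero =>
      have : (((0 : ↥sl2R), (0 : ↥𝔥), (0 : (Fin 2 → ℝ) ⊗[ℝ] V)) : gType V 𝔥) = 0 := rfl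
      rw [this, map_zero, map_zero]
      rfl
    | tmul e x =>
      rw [ha0split, map_add, LinearMap.add_apply, hbr_st, hbr_ht, hL]
      simp [Prod.ext_iff, TensorProduct.tmul_add]
    | add τ₁ τ₂ h₁ h₂ =>
      have h3 : (((0 : ↥sl2R), (0 : ↥𝔥), τ₁ + τ₂) : gType V 𝔥)
          = ((0, 0, τ₁) : gType V 𝔥) + (0, 0, τ₂) := by simp [Prod.ext_iff]
      rw [h3, map_add, h₁, h₂, map_add]
      simp [Prod.ext_iff]
  have hbrg : ∀ (A : ↥sl2R) (h : ↥𝔥) (τ : (Fin 2 → ℝ) ⊗[ℝ] V),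
      br ((A, h, τ) : gType V 𝔥) ((A₀, ρ₀, 0) : gType V 𝔥)
        = ((br ((A, 0, 0) : gType V 𝔥) ((A₀, 0, 0) : gType V 𝔥)).1, ⁅h, ρ₀⁆, - L τ) := by
    intro A h τ
    have e1 : br ((A, 0, 0) : gType V 𝔥) ((A₀, ρ₀, 0) : gType V 𝔥)
        = br ((A, 0, 0) : gType V 𝔥) ((A₀, 0, 0) : gType V 𝔥) := by
      rw [ha0split, map_add, hbr_sh, add_zero]
    have e2 : br ((0, h, 0) : gType V 𝔥) ((A₀, ρ₀, 0) : gType V 𝔥) = (0, ⁅h, ρ₀⁆, 0) := by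
      have e2' : br ((0, h, 0) : gType V 𝔥) ((A₀, 0, 0) : gType V 𝔥) = 0 := by
        rw [hskew, hbr_sh]
        abel
      rw [ha0split, map_add, e2', zero_add, hbr_hh]
    have e3 : br ((0, 0, τ) : gType V 𝔥) ((A₀, ρ₀, 0) : gType V 𝔥) = (0, 0, - L τ) := by
      have e3' : ((0, 0, L τ) : gType V 𝔥) + ((0, 0, - L τ) : gType V 𝔥) = 0 := by
        simp [Prod.ext_iff]
      rw [hskew, hLa]
      exact neg_eq_of_add_eq_zero_right (a := ((0, 0, L τ) : gType V 𝔥)) (b := ((0, 0, - L τ) : gType V 𝔥)) e3'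
    rw [hsplit A h τ, map_add, map_add, LinearMap.add_apply, LinearMap.add_apply, e1, e2, e3]
    obtain ⟨-, e5, e6⟩ := hbr_ss A A₀
    simp only [Prod.mk_zero_zero] at e5 e6 ⊢
    simp [Prod.ext_iff, e5, e6]
  have hem_ne : em ≠ 0 := by
    intro h0
    rw [h0] at ha1
    simp at ha1
  have hli : LinearIndependent ℝ ![ep, em] := by
    rw [LinearIndependent.pair_iff]
    intro s t hst
    have h1 : a (s • ep + t • em) em = 0 := by rw [hst]; simp
    have h2 : a ep (s • ep + t • em) = 0 := by rw [hst]; simp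
    simp only [map_add, map_smul, LinearMap.add_apply, LinearMap.smul_apply, ha_ep, ha_em,
      ha1, smul_eq_mul, mul_one, mul_zero, add_zero, zero_add] at h1 h2
    exact ⟨h1, h2⟩
  have hspan : ⊤ ≤ Submodule.span ℝ (Set.range ![ep, em]) := by
    intro v _
    obtain ⟨s, t, rfl⟩ := h_basis v
    refine Submodule.add_mem _ (Submodule.smul_mem _ _ ?_) (Submodule.smul_mem _ _ ?_)
    · exact Submodule.subset_span ⟨0, rfl⟩
    · exact Submodule.subset_span ⟨1, rfl⟩
  set b : Module.Basis (Fin 2) ℝ (Fin 2 → ℝ) := Module.Basis.mk hli hspan with hbdef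
  have hb0 : b 0 = ep := by simp [hbdef, Module.Basis.mk_apply]
  have hb1 : b 1 = em := by simp [hbdef, Module.Basis.mk_apply]
  have hrepr0 : ∀ v : Fin 2 → ℝ, b.repr v 0 = a v em := by
    intro v
    have h0 : v = a v em • b 0 + a ep v • b 1 := by rw [hb0, hb1]; exact hexp v
    conv_lhs => rw [h0]
    simp [Finsupp.single_apply]
  have hrepr1 : ∀ v : Fin 2 → ℝ, b.repr v 1 = a ep v := by
    intro v
    have h0 : v = a v em • b 0 + a ep v • b 1 := by rw [hb0, hb1]; exact hexp v
    conv_lhs => rw [h0]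
    simp [Finsupp.single_apply]
  have htr : ∀ f : Module.End ℝ (Fin 2 → ℝ),
      LinearMap.trace ℝ (Fin 2 → ℝ) f = a (f ep) em + a ep (f em) := by
    intro f
    rw [LinearMap.trace_eq_matrix_trace ℝ b, Matrix.trace, Fin.sum_univ_two]
    simp only [Matrix.diag_apply, LinearMap.toMatrix_apply, hb0, hb1, hrepr0, hrepr1]
  have hsl2 : ∀ A : ↥sl2R,
      ⁅(A : Module.End ℝ (Fin 2 → ℝ)), (A₀ : Module.End ℝ (Fin 2 → ℝ))⁆ = 0 →
      ∃ t : ℝ, (A : Module.End ℝ (Fin 2 → ℝ)) = t • (A₀ : Module.End ℝ (Fin 2 → ℝ)) := by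
    intro A hcm
    set f := (A : Module.End ℝ (Fin 2 → ℝ)) with hf
    have hcv : ∀ w, f ((A₀ : Module.End ℝ (Fin 2 → ℝ)) w)
        = (A₀ : Module.End ℝ (Fin 2 → ℝ)) (f w) := by
      intro w
      have h := LinearMap.ext_iff.mp hcm w
      simpa [Ring.lie_def, LinearMap.sub_apply, Module.End.mul_apply, sub_eq_zero] using h
    have hmem : LinearMap.trace ℝ (Fin 2 → ℝ) f = 0 := by
      have h : (A : Module.End ℝ (Fin 2 → ℝ))
          ∈ LinearMap.ker (LinearMap.trace ℝ (Fin 2 → ℝ)) := A.2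
      exact LinearMap.mem_ker.mp h
    have htrA : a (f ep) em + a ep (f em) = 0 := by rw [← htr f]; exact hmem
    -- commutation evaluated at ep
    have he1 : (-c) • f em = (a (f ep) em) • ((-c) • em) + (a ep (f ep)) • (c • ep) := by
      have h := hcv ep
      rw [hA₀ep, map_smul] at h
      rw [h]
      conv_lhs => rw [hexp (f ep)]
      rw [map_add, map_smul, map_smul, hA₀ep, hA₀em]
    -- coefficients of f em
    have hgem : a (f em) em = - a ep (f ep) := by
      have h := congrArg (fun w => a w em) he1
      simp only [map_add, map_smul, LinearMap.add_apply, LinearMap.smul_apply, ha_em, ha1,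
        smul_eq_mul, mul_zero, add_zero, map_neg, LinearMap.neg_apply] at h
      -- h : -c * a (f em) em = c * a ep (f ep) (roughly)
      have hc' : c ≠ 0 := ne_of_gt hc
      field_simp at h
      nlinarith [h]
    have hdem : a ep (f em) = a (f ep) em := by
      have h := congrArg (fun w => a ep w) he1
      simp only [map_add, map_smul, smul_eq_mul, ha_ep, ha1, mul_zero, add_zero] at h
      have hc' : c ≠ 0 := ne_of_gt hc
      nlinarith [h]
    have hα : a (f ep) em = 0 := by
      have := htrA
      rw [hdem] at this
      linarith
    have hfep' : f ep = (a ep (f ep)) • em := by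
      conv_lhs => rw [hexp (f ep)]
      rw [hα]
      module
    have hfem' : f em = (- a ep (f ep)) • ep := by
      conv_lhs => rw [hexp (f em)]
      rw [hgem, hdem, hα]
      module
    refine ⟨- (a ep (f ep)) / c, ?_⟩
    apply LinearMap.ext
    intro v
    obtain ⟨s, u, rfl⟩ := h_basis v
    rw [map_add, map_smul, map_smul, LinearMap.smul_apply, map_add, map_smul, map_smul,
      hfep', hfem', hA₀ep, hA₀em]
    have hc' : c ≠ 0 := ne_of_gt hc
    match_scalars <;> simp only [map_smul, smul_eq_mul, ha1, mul_one] <;> field_simp [ha1, ha_ep, ha_em, ha_me] <;> ring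
  have hc' : c ≠ 0 := ne_of_gt hc
  constructor
  · -- characterization of the centralizer
    intro g
    constructor
    · intro h0
      obtain ⟨A, h, τ⟩ := g
      rw [hbrg] at h0
      simp only [Prod.ext_iff, Prod.fst_zero, Prod.snd_zero] at h0
      obtain ⟨hc1, hc2, hc3⟩ := h0
      have hcm : ⁅(A : Module.End ℝ (Fin 2 → ℝ)), (A₀ : Module.End ℝ (Fin 2 → ℝ))⁆ = 0 := by
        rw [← (hbr_ss A A₀).1, hc1, ZeroMemClass.coe_zero]
      obtain ⟨t, ht⟩ := hsl2 A hcm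
      have hAt : A = t • A₀ := by
        apply Subtype.ext
        rw [ht]
        rfl
      have hLτ : L τ = 0 := by rwa [neg_eq_zero] at hc3
      obtain ⟨u, v, hτ⟩ : ∃ u v : V, τ = ep ⊗ₜ[ℝ] u + em ⊗ₜ[ℝ] v := ⟨φ τ, ψ τ, (htau τ).symm⟩
      subst hτ
      have hkey : (ρ₀ : Module.End ℝ V) u + c • v = 0 := by
        have h2 := congrArg φ hLτ
        rw [map_zero, map_add, hL, hL, hA₀ep, hA₀em] at h2
        simp only [map_add, ← TensorProduct.smul_tmul', map_smul, hφ, ha_em, ha1, smul_smul,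
          smul_zero, mul_one, one_smul, zero_add, add_zero, mul_zero, zero_smul] at h2
        -- h2 should be : ρ₀ u + c • v = 0 (up to ordering)
        linear_combination (norm := module) h2
      refine ⟨t, h - t • ρ₀, c⁻¹ • u, ?_, ?_⟩
      · rw [sub_lie, smul_lie, lie_self, smul_zero, hc2, sub_zero]
      · have hx1 : (ρ₀ : Module.End ℝ V) (c⁻¹ • u) = -v := by
          rw [map_smul]
          have h3 : (ρ₀ : Module.End ℝ V) u = -(c • v) :=
            eq_neg_of_add_eq_zero_left hkey
          rw [h3, smul_neg, smul_smul, inv_mul_cancel₀ hc', one_smul]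
        have hg2 : t • ((A₀, ρ₀, 0) : gType V 𝔥)
            + ((0 : ↥sl2R), h - t • ρ₀, (0 : (Fin 2 → ℝ) ⊗[ℝ] V))
            + ((0 : ↥sl2R), (0 : ↥𝔥),
                c • (ep ⊗ₜ[ℝ] (c⁻¹ • u)) - em ⊗ₜ[ℝ] ((ρ₀ : Module.End ℝ V) (c⁻¹ • u)))
            = ((t • A₀, h,
                c • (ep ⊗ₜ[ℝ] (c⁻¹ • u)) - em ⊗ₜ[ℝ] ((ρ₀ : Module.End ℝ V) (c⁻¹ • u)))
                : gType V 𝔥) := by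
          refine Prod.ext ?_ (Prod.ext ?_ ?_) <;> simp <;> abel
        rw [hg2]
        refine Prod.ext ?_ (Prod.ext ?_ ?_)
        · simpa using hAt
        · rfl
        · show ep ⊗ₜ[ℝ] u + em ⊗ₜ[ℝ] v = _
          rw [hx1, TensorProduct.tmul_smul, smul_smul, mul_inv_cancel₀ hc', one_smul,
            TensorProduct.tmul_neg, sub_neg_eq_add]
    · rintro ⟨t, k, x, hk, rfl⟩
      have hg : t • ((A₀, ρ₀, 0) : gType V 𝔥) + ((0 : ↥sl2R), k, (0 : (Fin 2 → ℝ) ⊗[ℝ] V))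
          + ((0 : ↥sl2R), (0 : ↥𝔥),
              c • (ep ⊗ₜ[ℝ] x) - em ⊗ₜ[ℝ] ((ρ₀ : Module.End ℝ V) x))
          = ((t • A₀, t • ρ₀ + k,
              c • (ep ⊗ₜ[ℝ] x) - em ⊗ₜ[ℝ] ((ρ₀ : Module.End ℝ V) x)) : gType V 𝔥) := by
        refine Prod.ext ?_ (Prod.ext ?_ ?_) <;> simp
      rw [hg, hbrg]
      have c1 : ((br ((t • A₀, 0, 0) : gType V 𝔥)) ((A₀, 0, 0) : gType V 𝔥)).1 = 0 := by
        apply Subtype.ext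
        have h1 := (hbr_ss (t • A₀) A₀).1
        rw [h1]
        show ⁅((t • A₀ : ↥sl2R) : Module.End ℝ (Fin 2 → ℝ)), _⁆ = _
        rw [Submodule.coe_smul, smul_lie, lie_self, smul_zero]
        rfl
      have c2 : ⁅t • ρ₀ + k, ρ₀⁆ = (0 : ↥𝔥) := by
        rw [add_lie, smul_lie, lie_self, smul_zero, zero_add, hk]
      have c3 := hker x
      simp [Prod.ext_iff, c1, c2, c3]
  · -- directness of the sum
    intro t t' k k' x x' hk hk' heq
    have h1 := congrArg Prod.fst heq
    have h2 := congrArg (fun p : gType V 𝔥 => p.2.1) heq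
    have h3 := congrArg (fun p : gType V 𝔥 => p.2.2) heq
    simp only [Prod.fst_add, Prod.snd_add, Prod.smul_fst, Prod.smul_snd, add_zero, zero_add,
      smul_zero] at h1 h2 h3
    have htt : t = t' := by
      have h4 := congrArg (fun z : ↥sl2R => a ((z : Module.End ℝ (Fin 2 → ℝ)) em) em) h1
      simp only [SetLike.val_smul, LinearMap.smul_apply, hA₀em, map_smul, smul_eq_mul, ha1,
        mul_one] at h4
      exact mul_right_cancel₀ hc' h4
    subst htt
    have hkk : k = k' := by exact add_left_cancel h2
    have h5 := congrArg φ h3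
    simp only [map_sub, map_smul, hφ, ha1, ha_em, one_smul, zero_smul, sub_zero] at h5
    have hxx : x = x' := smul_right_injective V hc' h5
    exact ⟨rfl, hkk, hxx⟩
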